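/- For a CNOT gate C on two qubits and the swap gate S, the family CS^α (0 ≤ α ≤ 1), with S^α realized via exp(iπαS/2) up to phase, satisfies E(CS^α) = (5 − cos(πα))/8, and consequently e_p(CS^α) = 2/3 for all α, while g_t(CS^α) = 1/2 − cos(πα)/6. -/

import Mathlib

open Matrix Complex

noncomputable section

/-- The swap operator `S` on `ℂ^N ⊗ ℂ^N`: `⟨iα|S|jβ⟩ = δ_{iβ} δ_{αj}`. -/
def swapOp (N : ℕ) : Matrix (Fin N × Fin N) (Fin N × Fin N) ℂ :=
  Matrix.of fun p q => if p.1 = q.2 ∧ p.2 = q.1 then 1 else 0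

/-- The reshuffled matrix: `(U^R)_{ij,αβ} = U_{iα,jβ}`. -/
def resh (N : ℕ) (U : Matrix (Fin N × Fin N) (Fin N × Fin N) ℂ) :
    Matrix (Fin N × Fin N) (Fin N × Fin N) ℂ :=
  Matrix.of fun p q => U (p.1, q.1) (p.2, q.2)

/-- Linear operator entanglement `E(U) = 1 - (1/N⁴) Tr((U^R U^{R†})²)`. -/
def EE (N : ℕ) (U : Matrix (Fin N × Fin N) (Fin N × Fin N) ℂ) : ℝ :=
  1 - (1 / (N : ℝ) ^ 4) * (((resh N U * (resh N U)ᴴ) ^ 2).trace).re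

/-- Entangling power `e_p(U) = [E(U) + E(US) − E(S)] / E(S)`. -/
def ep (N : ℕ) (U : Matrix (Fin N × Fin N) (Fin N × Fin N) ℂ) : ℝ :=
  (EE N U + EE N (U * swapOp N) - EE N (swapOp N)) / EE N (swapOp N)

/-- Gate typicality `g_t(U) = [E(U) − E(US) + E(S)] / (2 E(S))`. -/
def gt' (N : ℕ) (U : Matrix (Fin N × Fin N) (Fin N × Fin N) ℂ) : ℝ :=
  (EE N U - EE N (U * swapOp N) + EE N (swapOp N)) / (2 * EE N (swapOp N))


/-- The CNOT gate on two qubits: `CNOT |i,α⟩ = |i, i ⊕ α⟩`. -/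
def cnot : Matrix (Fin 2 × Fin 2) (Fin 2 × Fin 2) ℂ :=
  Matrix.of fun p q => if p.1 = q.1 ∧ p.2 = q.1 + q.2 then 1 else 0

/-!
Since `S * S = 1`, `exp(iθS) = cos θ + i sin θ S`, so with `θ = πα/2` the gate `C S^α` is
`a C + i b CS` for `(a, b) = (cos θ, sin θ)`, while `C S^α S = i (b C − i a CS)` is of the same
form up to a phase, which `E` ignores. For `U = a C + i b CS` the Gram matrix `U^R U^{R†}` is an
explicit sparse 4 × 4 matrix, giving `Tr((U^R U^{R†})²) = 4(a² + b²)(2a² + b²)`; so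
`E(CS^α) = (3 − cos² θ)/4` and `E(CS^α S) = (3 − sin² θ)/4`, and the rest is
`cos² θ + sin² θ = 1` together with `cos(πα) = cos² θ − sin² θ`.
-/

theorem NormedSpace.exp_smul_of_mul_self_eq_one {A : Type*} [NormedRing A] [NormedAlgebra ℂ A]
    [CompleteSpace A] {S : A} (hS : S * S = 1) (c : ℂ) :
    NormedSpace.exp (c • S) = Complex.cosh c • (1 : A) + Complex.sinh c • S := by
  have hpow_even (n : ℕ) : S ^ (2 * n) = 1 := by rw [pow_mul, sq, hS, one_pow]
  refine (NormedSpace.exp_series_hasSum_exp' (𝕂 := ℂ) (c • S)).unique ?_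
  refine HasSum.even_add_odd ?_ ?_
  · convert (Complex.hasSum_cosh c).smul_const (1 : A) using 2 with n
    rw [smul_pow, hpow_even, smul_smul, div_eq_inv_mul]
  · convert (Complex.hasSum_sinh c).smul_const S using 2 with n
    rw [smul_pow, pow_succ S, hpow_even, one_mul, smul_smul, div_eq_inv_mul]

theorem Matrix.exp_smul_of_mul_self_eq_one {m : Type*} [Fintype m] [DecidableEq m]
    {S : Matrix m m ℂ} (hS : S * S = 1) (c : ℂ) :
    NormedSpace.exp (c • S) = Complex.cosh c • (1 : Matrix m m ℂ) + Complex.sinh c • S :=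
  open scoped Norms.Operator in NormedSpace.exp_smul_of_mul_self_eq_one hS c

section swapOp

variable (N : ℕ)

theorem swapOp_apply (p q : Fin N × Fin N) : swapOp N p q = if p = q.swap then 1 else 0 := by
  simp [swapOp, Prod.ext_iff]

theorem mul_swapOp_apply (M : Matrix (Fin N × Fin N) (Fin N × Fin N) ℂ) (p q : Fin N × Fin N) :
    (M * swapOp N) p q = M p q.swap := by
  simp [mul_apply, swapOp_apply]

theorem swapOp_mul_self : swapOp N * swapOp N = 1 := by
  ext p q
  rw [mul_swapOp_apply, swapOp_apply, one_apply, Prod.swap_swap]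

theorem conjTranspose_swapOp : (swapOp N)ᴴ = swapOp N := by
  ext p q
  simp [swapOp, conjTranspose_apply, eq_comm, and_comm]

theorem resh_swapOp : resh N (swapOp N) = swapOp N := by
  ext p q
  simp [resh, swapOp, eq_comm]

theorem exp_I_mul_smul_swapOp (θ : ℝ) :
    NormedSpace.exp ((I * (θ : ℂ)) • swapOp N) =
      (Real.cos θ : ℂ) • (1 : Matrix (Fin N × Fin N) (Fin N × Fin N) ℂ) +
        ((Real.sin θ : ℂ) * I) • swapOp N := by
  rw [Matrix.exp_smul_of_mul_self_eq_one (swapOp_mul_self N), mul_comm I, Complex.cosh_mul_I,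
    Complex.sinh_mul_I, ofReal_cos, ofReal_sin]

theorem EE_swapOp : EE N (swapOp N) = 1 - 1 / (N : ℝ) ^ 2 := by
  rw [EE, resh_swapOp, conjTranspose_swapOp, swapOp_mul_self, one_pow, trace_one]
  simp only [Fintype.card_prod, Fintype.card_fin, Nat.cast_mul, mul_re, natCast_re, natCast_im,
    mul_zero, sub_zero]
  rcases eq_or_ne N 0 with rfl | hN
  · simp
  · field_simp

theorem EE_smul_of_norm_eq_one {u : ℂ} (hu : ‖u‖ = 1)
    (U : Matrix (Fin N × Fin N) (Fin N × Fin N) ℂ) : EE N (u • U) = EE N U := by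
  have hresh : resh N (u • U) = u • resh N U := rfl
  have hu' : u * star u = 1 := by
    rw [Complex.star_def, Complex.mul_conj, Complex.normSq_eq_norm_sq, hu]
    norm_num
  rw [EE, EE, hresh, conjTranspose_smul, smul_mul_smul_comm, hu', one_smul]

end swapOp

def cnotSwapMix (a b : ℝ) : Matrix (Fin 2 × Fin 2) (Fin 2 × Fin 2) ℂ :=
  (a : ℂ) • cnot + ((b : ℂ) * I) • (cnot * swapOp 2)

theorem cnot_mul_exp_I_mul_smul_swapOp (θ : ℝ) :
    cnot * NormedSpace.exp ((I * (θ : ℂ)) • swapOp 2) =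
      cnotSwapMix (Real.cos θ) (Real.sin θ) := by
  rw [exp_I_mul_smul_swapOp, mul_add, mul_smul_comm, mul_smul_comm, mul_one, cnotSwapMix]

theorem cnotSwapMix_mul_swapOp (a b : ℝ) :
    cnotSwapMix a b * swapOp 2 = I • cnotSwapMix b (-a) := by
  rw [cnotSwapMix, cnotSwapMix, add_mul, smul_mul_assoc, smul_mul_assoc, mul_assoc,
    swapOp_mul_self, mul_one, smul_add, smul_smul, smul_smul, add_comm]
  match_scalars
  · ring
  · linear_combination (a : ℂ) * I_sq

theorem resh_cnotSwapMix_apply (a b : ℝ) (p q : Fin 2 × Fin 2) :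
    resh 2 (cnotSwapMix a b) p q =
      (if p.1 = p.2 ∧ q.1 = p.2 + q.2 then (a : ℂ) else 0) +
        if p.1 = q.2 ∧ q.1 = q.2 + p.2 then (b : ℂ) * I else 0 := by
  simp [resh, cnotSwapMix, mul_swapOp_apply, cnot]

theorem resh_cnotSwapMix_mul_conjTranspose_apply (a b : ℝ) (p q : Fin 2 × Fin 2) :
    (resh 2 (cnotSwapMix a b) * (resh 2 (cnotSwapMix a b))ᴴ) p q =
      if p = q then (if p.1 = p.2 then 2 * a ^ 2 + b ^ 2 else b ^ 2 : ℂ)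
      else if p.2 = q.2 then (if p.1 = p.2 then -(a * b * I) else a * b * I)
      else 0 := by
  simp only [mul_apply, conjTranspose_apply, resh_cnotSwapMix_apply]
  obtain ⟨i, j⟩ := p
  obtain ⟨k, l⟩ := q
  fin_cases i <;> fin_cases j <;> fin_cases k <;> fin_cases l <;>
    simp [Fintype.sum_prod_type] <;> ring_nf <;> simp [I_sq]

theorem trace_sq_resh_cnotSwapMix_mul_conjTranspose (a b : ℝ) :
    ((resh 2 (cnotSwapMix a b) * (resh 2 (cnotSwapMix a b))ᴴ) ^ 2).trace =
      4 * ((a ^ 2 + b ^ 2) * (2 * a ^ 2 + b ^ 2)) := by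
  simp only [sq, trace, diag, mul_apply (M := resh 2 _ * _),
    resh_cnotSwapMix_mul_conjTranspose_apply]
  simp only [mul_ite, ite_mul, neg_mul, zero_mul, mul_neg, mul_zero, Fintype.sum_prod_type,
    Fin.sum_univ_two, Fin.isValue, ↓reduceIte, zero_ne_one, one_ne_zero, Prod.mk.injEq, and_true,
    and_false, add_zero, zero_add]
  linear_combination (-4 * (a : ℂ) ^ 2 * (b : ℂ) ^ 2) * I_sq

theorem EE_cnotSwapMix (a b : ℝ) :
    EE 2 (cnotSwapMix a b) = 1 - (a ^ 2 + b ^ 2) * (2 * a ^ 2 + b ^ 2) / 4 := by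
  rw [EE, trace_sq_resh_cnotSwapMix_mul_conjTranspose]
  norm_cast
  ring

theorem cnot_swap_family_general (α : ℝ) :
    EE 2 (cnot * NormedSpace.exp ((Complex.I * ((Real.pi * α / 2 : ℝ) : ℂ)) • swapOp 2)) =
      (5 - Real.cos (Real.pi * α)) / 8 ∧
    ep 2 (cnot * NormedSpace.exp ((Complex.I * ((Real.pi * α / 2 : ℝ) : ℂ)) • swapOp 2)) =
      2 / 3 ∧
    gt' 2 (cnot * NormedSpace.exp ((Complex.I * ((Real.pi * α / 2 : ℝ) : ℂ)) • swapOp 2)) =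
      1 / 2 - Real.cos (Real.pi * α) / 6 := by
  set θ := Real.pi * α / 2
  set c := Real.cos θ
  set s := Real.sin θ
  have hcs : s ^ 2 + c ^ 2 = 1 := Real.sin_sq_add_cos_sq θ
  have hcos : Real.cos (Real.pi * α) = c ^ 2 - s ^ 2 := by
    rw [show Real.pi * α = 2 * θ by ring, Real.cos_two_mul]
    linear_combination hcs
  have hE : EE 2 (cnotSwapMix c s) = 1 - (s ^ 2 + c ^ 2) * (2 * c ^ 2 + s ^ 2) / 4 := by
    rw [EE_cnotSwapMix]; ring
  have hES : EE 2 (cnotSwapMix c s * swapOp 2) =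
      1 - (s ^ 2 + c ^ 2) * (2 * s ^ 2 + c ^ 2) / 4 := by
    rw [cnotSwapMix_mul_swapOp, EE_smul_of_norm_eq_one 2 (by simp), EE_cnotSwapMix]; ring
  have hS : EE 2 (swapOp 2) = 3 / 4 := by
    rw [EE_swapOp]; norm_num
  rw [cnot_mul_exp_I_mul_smul_swapOp, ep, gt', hE, hES, hS, hcos, hcs]
  exact ⟨by linear_combination (-3 / 8) * hcs, by linear_combination -hcs, by ring⟩

/-- For the family `C S^α` (with `S^α` realized via `exp(iπαS/2)`, up to phase),
`E(CS^α) = (5 − cos(πα))/8`, `e_p(CS^α) = 2/3`, and `g_t(CS^α) = 1/2 − cos(πα)/6`. -/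
theorem cnot_swap_family (α : ℝ) (h0 : 0 ≤ α) (h1 : α ≤ 1) :
    EE 2 (cnot * NormedSpace.exp ((Complex.I * ((Real.pi * α / 2 : ℝ) : ℂ)) • swapOp 2)) =
      (5 - Real.cos (Real.pi * α)) / 8 ∧
    ep 2 (cnot * NormedSpace.exp ((Complex.I * ((Real.pi * α / 2 : ℝ) : ℂ)) • swapOp 2)) =
      2 / 3 ∧
    gt' 2 (cnot * NormedSpace.exp ((Complex.I * ((Real.pi * α / 2 : ℝ) : ℂ)) • swapOp 2)) =
      1 / 2 - Real.cos (Real.pi * α) / 6 :=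
  cnot_swap_family_general α
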